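/- Let X be a locally compact Hausdorff space, A = C_b(X) the C*-algebra of bounded continuous functions, and M = C₀(X) viewed as a Hilbert A-module with inner product ⟨f, g⟩ = f̄ g. Then the dual module M' is isomorphic to C_b(X): every bounded anti-A-linear functional φ : C₀(X) → C_b(X) is of the form φ(f) = f̄ h for a unique h ∈ C_b(X), with ‖φ‖ = ‖h‖. -/

import Mathlib

/-!
Evaluating the module law `φ (e * f) = f̄ · φ e = ē · φ f` at a point `x` where `e x = 1` gives
`φ f x = f̄ x · h x` with `h x := φ e x`, so `h` does not depend on the choice of `e`. Choosing `e`
equal to `1` on a neighbourhood of `x` shows that `h` agrees with the continuous function `φ e`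
near `x`. Choosing moreover `‖e‖ ≤ 1` gives `‖h x‖ ≤ ‖φ e‖`, which bounds `h` and, together with
`‖φ f‖ ≤ ‖f‖ ‖h‖`, shows that the norm of `φ` is `‖h‖`.
-/

open ZeroAtInfty BoundedContinuousFunction Filter Topology

theorem ZeroAtInftyContinuousMap.exists_eventuallyEq_one_norm_le_one {X : Type*}
    [TopologicalSpace X] [RegularSpace X] [LocallyCompactSpace X] (x : X) :
    ∃ e : C₀(X, ℂ), (∀ᶠ y in 𝓝 x, e y = 1) ∧ ‖e‖ ≤ 1 := by
  obtain ⟨K, hK, hxK⟩ := exists_compact_mem_nhds x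
  obtain ⟨f, hf1, -, hfc, hf01⟩ :=
    exists_continuous_one_zero_of_isCompact hK isClosed_empty (Set.disjoint_empty K)
  refine ⟨⟨⟨fun y => (f y : ℂ), by fun_prop⟩,
    (hfc.comp_left Complex.ofReal_zero).is_zero_at_infty⟩, ?_, ?_⟩
  · filter_upwards [hxK] with y hy
    simp [hf1 hy]
  · rw [← norm_toBCF_eq_norm]
    refine (BoundedContinuousFunction.norm_le zero_le_one).2 fun y => ?_
    simpa [abs_le] using ⟨(hf01 y).1.trans' (by norm_num), (hf01 y).2⟩

section ModuleMap

variable {X : Type*} [TopologicalSpace X] {φ : C₀(X, ℂ) → (X →ᵇ ℂ)}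

theorem apply_eq_star_mul_apply_of_eq_one
    (hmod : ∀ (f h : C₀(X, ℂ)) (g : X →ᵇ ℂ), (∀ x, h x = f x * g x) → φ h = star g * φ f)
    {e : C₀(X, ℂ)} {x : X} (he : e x = 1) (f : C₀(X, ℂ)) :
    φ f x = star (f x) * φ e x := by
  have h₁ : φ (e * f) = star f.toBCF * φ e := hmod e (e * f) f.toBCF fun _ => rfl
  have h₂ : φ (e * f) = star e.toBCF * φ f := hmod f (e * f) e.toBCF fun _ => mul_comm _ _
  simpa [he] using congrArg (· x) (h₂.symm.trans h₁)

theorem exists_forall_apply_eq_star_mul [RegularSpace X] [LocallyCompactSpace X]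
    (hmod : ∀ (f h : C₀(X, ℂ)) (g : X →ᵇ ℂ), (∀ x, h x = f x * g x) → φ h = star g * φ f)
    (hbd : ∃ C : ℝ, ∀ f : C₀(X, ℂ), ‖φ f‖ ≤ C * ‖f‖) :
    ∃ h : X →ᵇ ℂ, ∀ (f : C₀(X, ℂ)) (x : X), φ f x = star (f x) * h x := by
  obtain ⟨C, hC⟩ := hbd
  choose e he1 he using ZeroAtInftyContinuousMap.exists_eventuallyEq_one_norm_le_one (X := X)
  set h₀ : X → ℂ := fun x => φ (e x) x
  have formula (f : C₀(X, ℂ)) (x : X) : φ f x = star (f x) * h₀ x :=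
    apply_eq_star_mul_apply_of_eq_one hmod (he1 x).self_of_nhds f
  have hcont : Continuous h₀ := continuous_iff_continuousAt.2 fun x =>
    (φ (e x)).continuous.continuousAt.congr <| by
      filter_upwards [he1 x] with y hy
      simp [formula (e x) y, hy]
  have hbound (x : X) : ‖h₀ x‖ ≤ max C 0 :=
    calc ‖h₀ x‖ ≤ ‖φ (e x)‖ := (φ (e x)).norm_coe_le_norm x
      _ ≤ C * ‖e x‖ := hC (e x)
      _ ≤ max C 0 * ‖e x‖ := mul_le_mul_of_nonneg_right (le_max_left C 0) (norm_nonneg _)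
      _ ≤ max C 0 := mul_le_of_le_one_right (le_max_right C 0) (he x)
  exact ⟨.ofNormedAddCommGroup h₀ hcont _ hbound, formula⟩

theorem sSup_norm_image_closedBall_eq_norm [RegularSpace X] [LocallyCompactSpace X]
    {h : X →ᵇ ℂ} (hφ : ∀ (f : C₀(X, ℂ)) (x : X), φ f x = star (f x) * h x) :
    sSup ((fun f => ‖φ f‖) '' {f : C₀(X, ℂ) | ‖f‖ ≤ 1}) = ‖h‖ := by
  set S := (fun f => ‖φ f‖) '' {f : C₀(X, ℂ) | ‖f‖ ≤ 1}
  have hS : ∀ a ∈ S, a ≤ ‖h‖ := by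
    rintro _ ⟨f, hf, rfl⟩
    refine (BoundedContinuousFunction.norm_le (norm_nonneg h)).2 fun x => ?_
    calc ‖φ f x‖ = ‖f x‖ * ‖h x‖ := by rw [hφ, norm_mul, norm_star]
      _ ≤ 1 * ‖h‖ := by
        gcongr
        · exact (f.toBCF.norm_coe_le_norm x).trans (ZeroAtInftyContinuousMap.norm_toBCF_eq_norm.trans_le hf)
        · exact h.norm_coe_le_norm x
      _ = ‖h‖ := one_mul _
  refine le_antisymm (Real.sSup_le hS (norm_nonneg h)) ?_
  have hBdd : BddAbove S := ⟨‖h‖, hS⟩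
  have hS0 : 0 ≤ sSup S := Real.sSup_nonneg <| by
    rintro _ ⟨f, -, rfl⟩
    exact norm_nonneg _
  refine (BoundedContinuousFunction.norm_le hS0).2 fun x => ?_
  obtain ⟨e, he1, he⟩ := ZeroAtInftyContinuousMap.exists_eventuallyEq_one_norm_le_one x
  calc ‖h x‖ = ‖φ e x‖ := by simp [hφ, he1.self_of_nhds]
    _ ≤ ‖φ e‖ := (φ e).norm_coe_le_norm x
    _ ≤ sSup S := le_csSup hBdd ⟨e, he, rfl⟩

end ModuleMap

open ZeroAtInfty BoundedContinuousFunction in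
theorem statement7_general (X : Type*) [TopologicalSpace X] [LocallyCompactSpace X] [T2Space X]
    (φ : C₀(X, ℂ) → (X →ᵇ ℂ))
    (hmod : ∀ (f h : C₀(X, ℂ)) (g : X →ᵇ ℂ), (∀ x, h x = f x * g x) → φ h = star g * φ f)
    (hbd : ∃ C : ℝ, ∀ f : C₀(X, ℂ), ‖φ f‖ ≤ C * ‖f‖) :
    ∃! h : X →ᵇ ℂ,
      (∀ (f : C₀(X, ℂ)) (x : X), φ f x = star (f x) * h x) ∧
      sSup ((fun f => ‖φ f‖) '' {f : C₀(X, ℂ) | ‖f‖ ≤ 1}) = ‖h‖ := by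
  obtain ⟨h, hφ⟩ := exists_forall_apply_eq_star_mul hmod hbd
  refine ⟨h, ⟨hφ, sSup_norm_image_closedBall_eq_norm hφ⟩, fun h' ⟨hφ', _⟩ => ?_⟩
  ext x
  obtain ⟨e, he1, -⟩ := ZeroAtInftyContinuousMap.exists_eventuallyEq_one_norm_le_one x
  simpa [he1.self_of_nhds] using (hφ' e x).symm.trans (hφ e x)

open ZeroAtInfty BoundedContinuousFunction in
/-- For a locally compact Hausdorff (σ-compact) space `X`, the dual of the
Hilbert `C_b(X)`-module `M = C₀(X)` is `C_b(X)`: every bounded anti-`C_b(X)`-linear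
functional `φ : C₀(X) → C_b(X)` is of the form `φ(f) = f̄ h` for a unique `h ∈ C_b(X)`,
and `‖φ‖ = ‖h‖`. -/
theorem statement7 (X : Type*) [TopologicalSpace X] [LocallyCompactSpace X] [T2Space X]
    [SigmaCompactSpace X]
    (φ : C₀(X, ℂ) → (X →ᵇ ℂ))
    (hadd : ∀ f g : C₀(X, ℂ), φ (f + g) = φ f + φ g)
    (hmod : ∀ (f h : C₀(X, ℂ)) (g : X →ᵇ ℂ), (∀ x, h x = f x * g x) → φ h = star g * φ f)
    (hc : ∀ (z : ℂ) (f : C₀(X, ℂ)), φ (z • f) = star z • φ f)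
    (hbd : ∃ C : ℝ, ∀ f : C₀(X, ℂ), ‖φ f‖ ≤ C * ‖f‖) :
    ∃! h : X →ᵇ ℂ,
      (∀ (f : C₀(X, ℂ)) (x : X), φ f x = star (f x) * h x) ∧
      sSup ((fun f => ‖φ f‖) '' {f : C₀(X, ℂ) | ‖f‖ ≤ 1}) = ‖h‖ :=
  statement7_general X φ hmod hbd
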